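/- Let n ≥ 1, let ρ ≥ 0, d ≥ 0, J ≥ 0, and let T : Fin n → ℝ be monotone nondecreasing with 0 ≤ T(0), T(n−1) ≤ d, T(i+1) − T(i) ≤ J for all i < n−1, d + T(0) − T(n−1) ≤ J, and T(0) ≤ J. Define τ(i) = (1+ρ)·T(i+1) − (1−ρ)·T(i) for i < n−1, τ(n−1) = (1+ρ)·(d + T(0)) − (1−ρ)·T(n−1), and σ(i) = (1+ρ)·T(i) − (1−ρ)·T(i) for all i. Then max over all i of τ(i) and σ(i) is at most J + ρ·(J + 2·d). -/

import Mathlib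

/-! Writing the worst-case actual gap between planned times `a` and `b` as
`(1 + ρ) b - (1 - ρ) a = (b - a) + ρ (a + b)`, it exceeds the planned gap `b - a` by `ρ` times
the sum of the two planned times. For consecutive satisfactions, and for a simultaneous pair,
both times lie in `[0, d]`, so that sum is at most `2 d`; for the wrap-around gap the later
time is `d + T 0 ≤ d + J`, which is where the extra `ρ J` comes from. -/

theorem one_add_mul_sub_one_sub_mul (ρ a b : ℝ) :
    (1 + ρ) * b - (1 - ρ) * a = (b - a) + ρ * (a + b) := by
  ring

theorem one_add_mul_sub_one_sub_mul_le {ρ a b J D : ℝ} (hρ : 0 ≤ ρ)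
    (hgap : b - a ≤ J) (hsum : a + b ≤ D) :
    (1 + ρ) * b - (1 - ρ) * a ≤ J + ρ * D := by
  rw [one_add_mul_sub_one_sub_mul]
  exact add_le_add hgap (mul_le_mul_of_nonneg_left hsum hρ)

theorem field_cost_bound_general (n : ℕ) (ρ d J : ℝ)
    (hρ : 0 ≤ ρ) (hJ : 0 ≤ J) (T : ℕ → ℝ)
    (hmono : ∀ i j, i ≤ j → j < n → T i ≤ T j)
    (hlast : T (n - 1) ≤ d)
    (hgap : ∀ i, i < n - 1 → T (i + 1) - T i ≤ J)
    (hwrap : d + T 0 - T (n - 1) ≤ J)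
    (hfirst : T 0 ≤ J) :
    (∀ i, i < n - 1 → (1 + ρ) * T (i + 1) - (1 - ρ) * T i ≤ J + ρ * (J + 2 * d)) ∧
      (1 + ρ) * (d + T 0) - (1 - ρ) * T (n - 1) ≤ J + ρ * (J + 2 * d) ∧
      (∀ i, i < n → (1 + ρ) * T i - (1 - ρ) * T i ≤ J + ρ * (J + 2 * d)) := by
  have hle : ∀ i, i < n → T i ≤ d := fun i hi =>
    (hmono i (n - 1) (by omega) (by omega)).trans hlast
  refine ⟨fun i hi => ?_, ?_, fun i hi => ?_⟩
  · have hi' := hle i (by omega)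
    have hi1 := hle (i + 1) (by omega)
    exact one_add_mul_sub_one_sub_mul_le hρ (hgap i hi) (by linarith)
  · exact one_add_mul_sub_one_sub_mul_le hρ hwrap (by linarith)
  · have hi' := hle i hi
    exact one_add_mul_sub_one_sub_mul_le hρ (by linarith) (by linarith)

/-- Proposition 3: with planned satisfaction times `T 0 ≤ … ≤ T (n-1)` within one
suffix cycle of duration `d`, planned cost `J`, and relative deviations bounded by
`ρ`, the worst-case actual gaps `τ i` (including the wrap-around gap) and spreads
`σ i` are all bounded by `J + ρ·(J + 2·d)`; i.e. their maximum is at most this. -/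
theorem field_cost_bound (n : ℕ) (hn : 1 ≤ n) (ρ d J : ℝ)
    (hρ : 0 ≤ ρ) (hd : 0 ≤ d) (hJ : 0 ≤ J) (T : ℕ → ℝ)
    (hmono : ∀ i j, i ≤ j → j < n → T i ≤ T j)
    (h0 : 0 ≤ T 0) (hlast : T (n - 1) ≤ d)
    (hgap : ∀ i, i < n - 1 → T (i + 1) - T i ≤ J)
    (hwrap : d + T 0 - T (n - 1) ≤ J)
    (hfirst : T 0 ≤ J) :
    (∀ i, i < n - 1 → (1 + ρ) * T (i + 1) - (1 - ρ) * T i ≤ J + ρ * (J + 2 * d)) ∧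
      (1 + ρ) * (d + T 0) - (1 - ρ) * T (n - 1) ≤ J + ρ * (J + 2 * d) ∧
      (∀ i, i < n → (1 + ρ) * T i - (1 - ρ) * T i ≤ J + ρ * (J + 2 * d)) :=
  field_cost_bound_general n ρ d J hρ hJ T hmono hlast hgap hwrap hfirst
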